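/- There exist positive semidefinite matrices A, B ∈ ℝ^{2×2} and factorizations A = LLᵀ, B = MMᵀ with L, M lower triangular with nonnegative diagonals such that dist_AW(L, M) < dist_AW(𝒞_min(A), 𝒞_min(B)), where 𝒞_min denotes the minimal Cholesky factor; concretely, with A = [[1,1],[1,1]], B = [[0,0],[0,1]], 𝒞_min(A) = [[1,0],[1,0]], 𝒞_min(B) = [[0,0],[0,1]], and M' = [[0,0],[1,0]], one has M'M'ᵀ = B, dist_AW²(𝒞_min(A), 𝒞_min(B)) = 3, and dist_AW²(𝒞_min(A), M') = 1. -/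

import Mathlib

open Matrix BigOperators Classical

/-- Squared Frobenius norm. -/
def frobSq {m n : Type*} [Fintype m] [Fintype n] (C : Matrix m n ℝ) : ℝ :=
  ∑ i, ∑ j, (C i j) ^ 2

/-- Frobenius norm. -/
noncomputable def frobNorm {m n : Type*} [Fintype m] [Fintype n]
    (C : Matrix m n ℝ) : ℝ :=
  Real.sqrt (frobSq C)

/-- Square root of a positive semidefinite matrix (junk value `0` otherwise). -/
noncomputable def psdSqrt {n : Type*} [Fintype n] [DecidableEq n]
    (A : Matrix n n ℝ) : Matrix n n ℝ :=
  if h : A.PosSemidef then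
    h.1.eigenvectorUnitary.1 * diagonal ((↑) ∘ (√·) ∘ h.1.eigenvalues) *
      (star h.1.eigenvectorUnitary : Matrix n n ℝ)
  else 0

/-- Nuclear norm: `‖C‖₊ = tr((CᵀC)^{1/2})`, the sum of the singular values. -/
noncomputable def nuclearNorm {m n : Type*} [Fintype m] [Fintype n] [DecidableEq n]
    (C : Matrix m n ℝ) : ℝ :=
  (psdSqrt (Cᵀ * C)).trace

/-- Squared Bures–Wasserstein distance:
`dist_BW²(A,B) = tr A + tr B − 2 tr((A^{1/2} B A^{1/2})^{1/2})`. -/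
noncomputable def distBWsq {n : Type*} [Fintype n] [DecidableEq n]
    (A B : Matrix n n ℝ) : ℝ :=
  A.trace + B.trace - 2 * (psdSqrt (psdSqrt A * B * psdSqrt A)).trace

variable {N d : ℕ}

/-- `L` is block lower triangular: all `d×d` blocks `L_{s,t}` with `s < t` vanish. -/
def BlockLowerTri (L : Matrix (Fin N × Fin d) (Fin N × Fin d) ℝ) : Prop :=
  ∀ s t : Fin N, s < t → ∀ i j : Fin d, L (s, i) (t, j) = 0

/-- The `t`-th `d×d` diagonal block of a matrix. -/
def diagBlock (A : Matrix (Fin N × Fin d) (Fin N × Fin d) ℝ) (t : Fin N) :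
    Matrix (Fin d) (Fin d) ℝ :=
  fun i j => A (t, i) (t, j)

/-- The `t`-th column block `L_{·,t} ∈ ℝ^{Nd×d}` of `L`. -/
def colBlock (L : Matrix (Fin N × Fin d) (Fin N × Fin d) ℝ) (t : Fin N) :
    Matrix (Fin N × Fin d) (Fin d) ℝ :=
  fun p j => L p (t, j)

/-- Block diagonal matrix built from `d×d` blocks `Q₁, …, Q_N`. -/
def blockDiag (Q : Fin N → Matrix (Fin d) (Fin d) ℝ) :
    Matrix (Fin N × Fin d) (Fin N × Fin d) ℝ :=
  fun p q => if p.1 = q.1 then Q q.1 p.2 q.2 else 0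

/-- Squared adapted Wasserstein pseudo-distance between Cholesky factors:
`dist_AW²(L,M) = ‖L‖_F² + ‖M‖_F² − 2 ∑_t ‖(LᵀM)_{t,t}‖₊`. -/
noncomputable def distAWsq (L M : Matrix (Fin N × Fin d) (Fin N × Fin d) ℝ) : ℝ :=
  frobSq L + frobSq M - 2 * ∑ t : Fin N, nuclearNorm (diagBlock (Lᵀ * M) t)

/-- Adapted Wasserstein pseudo-distance. -/
noncomputable def distAW (L M : Matrix (Fin N × Fin d) (Fin N × Fin d) ℝ) : ℝ :=
  Real.sqrt (distAWsq L M)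

/-- The covariance matrix `A = [[1,1],[1,1]]` (with `N = 2`, `d = 1`). -/
def Amat : Matrix (Fin 2 × Fin 1) (Fin 2 × Fin 1) ℝ := fun _ _ => 1

/-- The covariance matrix `B = [[0,0],[0,1]]`. -/
def Bmat : Matrix (Fin 2 × Fin 1) (Fin 2 × Fin 1) ℝ :=
  fun p q => if p.1 = 1 ∧ q.1 = 1 then 1 else 0

/-- The minimal Cholesky factor `𝒞_min(A) = [[1,0],[1,0]]`. -/
def CminA : Matrix (Fin 2 × Fin 1) (Fin 2 × Fin 1) ℝ :=
  fun _ q => if q.1 = 0 then 1 else 0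

/-- The minimal Cholesky factor `𝒞_min(B) = [[0,0],[0,1]]`. -/
def CminB : Matrix (Fin 2 × Fin 1) (Fin 2 × Fin 1) ℝ :=
  fun p q => if p.1 = 1 ∧ q.1 = 1 then 1 else 0

/-- The alternative factor `M' = [[0,0],[1,0]]`. -/
def Mprime : Matrix (Fin 2 × Fin 1) (Fin 2 × Fin 1) ℝ :=
  fun p q => if p.1 = 1 ∧ q.1 = 0 then 1 else 0

lemma psdSqrt_zero {n : Type*} [Fintype n] [DecidableEq n] :
    psdSqrt (0 : Matrix n n ℝ) = 0 := by
  rw [psdSqrt, dif_pos Matrix.PosSemidef.zero]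
  have h0 := (Matrix.PosSemidef.zero (n := n) (R := ℝ)).1.eigenvalues_eq_zero_iff.mpr rfl
  rw [h0]
  simp

lemma psdSqrt_one {n : Type*} [Fintype n] [DecidableEq n] :
    psdSqrt (1 : Matrix n n ℝ) = 1 := by
  rw [psdSqrt, dif_pos Matrix.PosSemidef.one]
  have h1 : ∀ i, (Matrix.PosSemidef.one (n := n) (R := ℝ)).1.eigenvalues i = 1 := by
    intro i
    rw [Matrix.IsHermitian.eigenvalues_eq]
    have hn := (Matrix.PosSemidef.one (n := n) (R := ℝ)).1.eigenvectorBasis.orthonormal.1 i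
    have hi := EuclideanSpace.inner_eq_star_dotProduct
      ((Matrix.PosSemidef.one (n := n) (R := ℝ)).1.eigenvectorBasis i)
      ((Matrix.PosSemidef.one (n := n) (R := ℝ)).1.eigenvectorBasis i)
    rw [real_inner_self_eq_norm_sq, hn] at hi
    simpa using hi.symm
  have hd : diagonal ((↑) ∘ (√·) ∘ (Matrix.PosSemidef.one (n := n) (R := ℝ)).1.eigenvalues)
      = (1 : Matrix n n ℝ) := by
    ext a b; simp [diagonal_apply, one_apply, h1]
  rw [hd, Matrix.mul_one]
  exact Matrix.mem_unitaryGroup_iff.mp (Matrix.PosSemidef.one (n := n) (R := ℝ)).1.eigenvectorUnitary.2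

lemma nuclearNorm_zero {n : Type*} [Fintype n] [DecidableEq n] :
    nuclearNorm (0 : Matrix n n ℝ) = 0 := by
  simp [nuclearNorm, psdSqrt_zero]

lemma nuclearNorm_one : nuclearNorm (1 : Matrix (Fin 1) (Fin 1) ℝ) = 1 := by
  simp [nuclearNorm, psdSqrt_one]

/-- A concrete example (with `N = 2`, `d = 1`) where using the minimal Cholesky
factors of both covariance matrices is not optimal: `M'` is a lower triangular
factor of `B` with nonnegative diagonal, yet
`dist_AW²(𝒞_min(A), M') = 1 < 3 = dist_AW²(𝒞_min(A), 𝒞_min(B))`. -/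
theorem minimal_cholesky_pair_not_optimal :
    Amat.PosSemidef ∧ Bmat.PosSemidef ∧
    CminA * CminAᵀ = Amat ∧ CminB * CminBᵀ = Bmat ∧ Mprime * Mprimeᵀ = Bmat ∧
    BlockLowerTri CminA ∧ BlockLowerTri CminB ∧ BlockLowerTri Mprime ∧
    (∀ p : Fin 2 × Fin 1, 0 ≤ CminA p p) ∧
    (∀ p : Fin 2 × Fin 1, 0 ≤ CminB p p) ∧
    (∀ p : Fin 2 × Fin 1, 0 ≤ Mprime p p) ∧
    (∀ p : Fin 2 × Fin 1, CminA p p = 0 → ∀ q : Fin 2 × Fin 1, CminA q p = 0) ∧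
    (∀ p : Fin 2 × Fin 1, CminB p p = 0 → ∀ q : Fin 2 × Fin 1, CminB q p = 0) ∧
    distAWsq CminA CminB = 3 ∧
    distAWsq CminA Mprime = 1 ∧
    distAWsq CminA Mprime < distAWsq CminA CminB := by 
  have hct : ∀ (C : Matrix (Fin 2 × Fin 1) (Fin 2 × Fin 1) ℝ), Cᴴ = Cᵀ := fun _ => rfl
  have hA : CminA * CminAᵀ = Amat := by
    ext ⟨s, i⟩ ⟨t, j⟩
    fin_cases s <;> fin_cases t <;> fin_cases i <;> fin_cases j <;>
      simp [Matrix.mul_apply, Fintype.sum_prod_type, Fin.sum_univ_two,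
        CminA, Amat, Matrix.transpose_apply]
  have hB : CminB * CminBᵀ = Bmat := by
    ext ⟨s, i⟩ ⟨t, j⟩
    fin_cases s <;> fin_cases t <;> fin_cases i <;> fin_cases j <;>
      simp [Matrix.mul_apply, Fintype.sum_prod_type, Fin.sum_univ_two,
        CminB, Bmat, Matrix.transpose_apply]
  have hM : Mprime * Mprimeᵀ = Bmat := by
    ext ⟨s, i⟩ ⟨t, j⟩
    fin_cases s <;> fin_cases t <;> fin_cases i <;> fin_cases j <;>
      simp [Matrix.mul_apply, Fintype.sum_prod_type, Fin.sum_univ_two,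
        Mprime, Bmat, Matrix.transpose_apply]
  have hApsd : Amat.PosSemidef := by
    rw [← hA, ← hct CminA]; exact Matrix.posSemidef_self_mul_conjTranspose _
  have hBpsd : Bmat.PosSemidef := by
    rw [← hB, ← hct CminB]; exact Matrix.posSemidef_self_mul_conjTranspose _
  have hd1 : diagBlock (CminAᵀ * CminB) 0 = 0 := by
    ext i j; fin_cases i; fin_cases j
    simp [diagBlock, Matrix.mul_apply, Fintype.sum_prod_type, Fin.sum_univ_two,
      CminA, CminB, Matrix.transpose_apply]
  have hd2 : diagBlock (CminAᵀ * CminB) 1 = 0 := by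
    ext i j; fin_cases i; fin_cases j
    simp [diagBlock, Matrix.mul_apply, Fintype.sum_prod_type, Fin.sum_univ_two,
      CminA, CminB, Matrix.transpose_apply]
  have hd3 : diagBlock (CminAᵀ * Mprime) 0 = 1 := by
    ext i j; fin_cases i; fin_cases j
    simp [diagBlock, Matrix.mul_apply, Fintype.sum_prod_type, Fin.sum_univ_two,
      CminA, Mprime, Matrix.transpose_apply, Matrix.one_apply]
    decide
  have hd4 : diagBlock (CminAᵀ * Mprime) 1 = 0 := by
    ext i j; fin_cases i; fin_cases j
    simp [diagBlock, Matrix.mul_apply, Fintype.sum_prod_type, Fin.sum_univ_two,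
      CminA, Mprime, Matrix.transpose_apply]
  have hfA : frobSq CminA = 2 := by
    simp [frobSq, Fintype.sum_prod_type, Fin.sum_univ_two, CminA]
    decide
  have hfB : frobSq CminB = 1 := by
    simp [frobSq, Fintype.sum_prod_type, Fin.sum_univ_two, CminB]
    decide
  have hfM : frobSq Mprime = 1 := by
    simp [frobSq, Fintype.sum_prod_type, Fin.sum_univ_two, Mprime]
    decide
  have hdAB : distAWsq CminA CminB = 3 := by
    rw [distAWsq, hfA, hfB, Fin.sum_univ_two, hd1, hd2, nuclearNorm_zero]
    ring
  have hdAM : distAWsq CminA Mprime = 1 := by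
    rw [distAWsq, hfA, hfM, Fin.sum_univ_two, hd3, hd4, nuclearNorm_zero,
      nuclearNorm_one]
    ring
  refine ⟨hApsd, hBpsd, hA, hB, hM, ?_, ?_, ?_, ?_, ?_, ?_, ?_, ?_, hdAB, hdAM, by
    rw [hdAB, hdAM]; norm_num⟩
  · intro s t hst i j
    fin_cases s <;> fin_cases t <;> simp_all [CminA]
  · intro s t hst i j
    fin_cases s <;> fin_cases t <;> simp_all [CminB]
  · intro s t hst i j
    fin_cases s <;> fin_cases t <;> simp_all [Mprime]
  · rintro ⟨s, i⟩; fin_cases s <;> simp [CminA]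
  · rintro ⟨s, i⟩; fin_cases s <;> simp [CminB]
  · rintro ⟨s, i⟩; fin_cases s <;> simp [Mprime]
  · rintro ⟨s, i⟩ h ⟨t, j⟩; fin_cases s <;> fin_cases t <;> simp_all [CminA]
  · rintro ⟨s, i⟩ h ⟨t, j⟩; fin_cases s <;> fin_cases t <;> simp_all [CminB]
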